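/- arXiv:2503.09869 — 2 statements merged into one kernel-verified Lean document; each statement's English description precedes it below -/
import Mathlib

section
/- In the renewal-theory throughput formula for a complete conflict graph, S_i = p_i ∏_{j ≠ i} (1 - p_j) T / (σ ∏_j (1 - p_j) + (1 - ∏_j (1 - p_j)) T), the sum over all i of S_i is at most 1, for any T ≥ σ > 0 and p_i ∈ [0,1]. -/
open Finset

lemma renewal_aux {ι : Type*} [DecidableEq ι] (p : ι → ℝ) (s : Finset ι)
    (hp : ∀ i ∈ s, 0 ≤ p i ∧ p i ≤ 1) :
    ∑ i ∈ s, p i * ∏ j ∈ s.erase i, (1 - p j) ≤ 1 - ∏ j ∈ s, (1 - p j) := by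
  induction s using Finset.induction_on with
  | empty => simp
  | @insert a s ha ih =>
    have hpa := hp a (Finset.mem_insert_self a s)
    have hps : ∀ i ∈ s, 0 ≤ p i ∧ p i ≤ 1 := fun i hi =>
      hp i (Finset.mem_insert_of_mem hi)
    have hP0 : 0 ≤ ∏ j ∈ s, (1 - p j) :=
      Finset.prod_nonneg fun j hj => by linarith [(hps j hj).2]
    have hP1 : ∏ j ∈ s, (1 - p j) ≤ 1 :=
      Finset.prod_le_one (fun j hj => by linarith [(hps j hj).2])
        (fun j hj => by linarith [(hps j hj).1])
    have hX := ih hps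
    rw [Finset.sum_insert ha, Finset.prod_insert ha, Finset.erase_insert ha]
    have hsum : ∑ i ∈ s, p i * ∏ j ∈ (insert a s).erase i, (1 - p j)
        = (1 - p a) * ∑ i ∈ s, p i * ∏ j ∈ s.erase i, (1 - p j) := by
      rw [Finset.mul_sum]
      refine Finset.sum_congr rfl fun i hi => ?_
      have hia : i ≠ a := fun h => ha (h ▸ hi)
      rw [Finset.erase_insert_of_ne hia.symm,
        Finset.prod_insert (fun h => ha (Finset.mem_of_mem_erase h))]
      ring
    rw [hsum]
    nlinarith [mul_le_mul_of_nonneg_left hX (by linarith [hpa.2] : (0:ℝ) ≤ 1 - p a),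
      mul_nonneg hpa.1 (by linarith : (0:ℝ) ≤ 1 - ∏ j ∈ s, (1 - p j))]

/-- **The renewal-theory throughputs for a complete conflict graph sum to at most 1.**
With `S i = p i * ∏_{j ≠ i} (1 - p j) * T / (σ * ∏_j (1 - p j) + (1 - ∏_j (1 - p j)) * T)`,
we have `∑ i, S i ≤ 1`. -/
theorem renewal_throughput_sum_le_one (n : ℕ) (p : Fin n → ℝ)
    (hp : ∀ i, p i ∈ Set.Icc (0 : ℝ) 1) (σ T : ℝ) (hσ : 0 < σ) (hT : σ ≤ T)
    (hden : 0 < σ * ∏ j, (1 - p j) + (1 - ∏ j, (1 - p j)) * T) :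
    ∑ i, p i * (∏ j ∈ univ.erase i, (1 - p j)) * T /
        (σ * ∏ j, (1 - p j) + (1 - ∏ j, (1 - p j)) * T) ≤ 1 := by
  rw [← Finset.sum_div, div_le_one hden, ← Finset.sum_mul]
  have key := renewal_aux p Finset.univ (fun i _ => ⟨(hp i).1, (hp i).2⟩)
  have hP0 : 0 ≤ ∏ j, (1 - p j) :=
    Finset.prod_nonneg fun j _ => by linarith [(hp j).2]
  have hT0 : 0 < T := lt_of_lt_of_le hσ hT
  nlinarith [mul_le_mul_of_nonneg_right key hT0.le, mul_nonneg hσ.le hP0]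
end

section
/- For the 3-node path conflict graph with T = 2, the throughput S_1 = 2 q_0 p_1 q_2 / (1 + q_1 p_2 + q_1 p_0 + p_1 + q_1 p_0 p_2) of the middle node, viewed as a function of p_1 ∈ [0,1] with p_0, p_2 ∈ [0,1) fixed, is monotonically increasing in p_1. -/
/-- **Monotonicity of the middle node's throughput in its own transmit probability**
for the 3-node path conflict graph with `T = 2`, with `p₀, p₂ ∈ [0,1)` fixed. -/
theorem path_middle_throughput_monotone (p₀ p₂ : ℝ)
    (h₀ : p₀ ∈ Set.Ico (0 : ℝ) 1) (h₂ : p₂ ∈ Set.Ico (0 : ℝ) 1) :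
    MonotoneOn (fun p₁ : ℝ =>
        2 * ((1 - p₀) * p₁ * (1 - p₂)) /
          (1 + (1 - p₁) * p₂ + (1 - p₁) * p₀ + p₁ + (1 - p₁) * p₀ * p₂))
      (Set.Icc (0 : ℝ) 1) := by
  obtain ⟨h00, h01⟩ := h₀
  obtain ⟨h20, h21⟩ := h₂
  intro x hx y hy hxy
  obtain ⟨hx0, hx1⟩ := hx
  obtain ⟨hy0, hy1⟩ := hy
  have hdx : (0:ℝ) < 1 + (1 - x) * p₂ + (1 - x) * p₀ + x + (1 - x) * p₀ * p₂ := by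
    nlinarith [mul_nonneg h00 h20, mul_nonneg (sub_nonneg.2 hx1) (mul_nonneg h00 h20)]
  have hdy : (0:ℝ) < 1 + (1 - y) * p₂ + (1 - y) * p₀ + y + (1 - y) * p₀ * p₂ := by
    nlinarith [mul_nonneg h00 h20, mul_nonneg (sub_nonneg.2 hy1) (mul_nonneg h00 h20)]
  simp only
  rw [div_le_div_iff₀ hdx hdy]
  nlinarith [mul_nonneg (mul_nonneg (sub_nonneg.2 h01.le) (sub_nonneg.2 h21.le)) (sub_nonneg.2 hxy),
    mul_nonneg h00 h20, mul_nonneg (mul_nonneg h00 h20) (sub_nonneg.2 hxy),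
    mul_nonneg h00 (sub_nonneg.2 hxy), mul_nonneg h20 (sub_nonneg.2 hxy)]
end
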